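/- arXiv:2605.28970 — 3 statements merged into one kernel-verified Lean document; each statement's English description precedes it below -/
import Mathlib

section
/- Let ξ = -2(1-2ρ)(x∂_x + y∂_y) and g = (dx² + dy²)/(E + x² + y²) on ℝ², with E > 0 and ρ ≠ 1/2 constants. Then L_ξ g = ψ·g with ψ = -4(1-2ρ)E/(E + x² + y²), and L_ξ L_ξ g = α · L_ξ g with α = -4(1-2ρ)(E - x² - y²)/(E + x² + y²). In particular, ξ is a mixed Killing vector field. -/
/-!
`g` and `L_ξ g` are both conformally flat with a radial factor `h(x² + y²)`, and along the
dilation field `c (x∂_x + y∂_y)` such a metric has Lie derivative `2c (t h(t))'` times the flat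
metric, evaluated at `t = x² + y²`. For `h = 1/(E + t)` this is `2cE/(E + t)²`, and for
`h = 1/(E + t)²` it is `2c(E - t)/(E + t)³`; the two ratios are `ψ` and `α`.
-/

open Real

noncomputable section

/-- Coordinate partial derivative on `ℝ²`. -/
def pd (i : Fin 2) (f : (Fin 2 → ℝ) → ℝ) (p : Fin 2 → ℝ) : ℝ :=
  fderiv ℝ f p (Pi.single i 1)

/-- Coordinate Lie derivative of a metric `g` along `V` on `ℝ²`. -/
def lieDeriv (V : (Fin 2 → ℝ) → (Fin 2 → ℝ))
    (g : (Fin 2 → ℝ) → Matrix (Fin 2) (Fin 2) ℝ) (p : Fin 2 → ℝ) :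
    Matrix (Fin 2) (Fin 2) ℝ :=
  fun i j =>
    (∑ k, V p k * pd k (fun q => g q i j) p)
      + (∑ k, g p k j * pd i (fun q => V q k) p)
      + (∑ k, g p i k * pd j (fun q => V q k) p)

/-- The cigar Ricci–Bourguignon metric `g = (dx² + dy²)/(E + x² + y²)`. -/
def cigarRB (E : ℝ) : (Fin 2 → ℝ) → Matrix (Fin 2) (Fin 2) ℝ :=
  fun p => (1 / (E + p 0 ^ 2 + p 1 ^ 2)) • (1 : Matrix (Fin 2) (Fin 2) ℝ)

/-- The potential vector field `ξ = -2(1-2ρ)(x∂_x + y∂_y)`. -/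
def xiRB (ρ : ℝ) : (Fin 2 → ℝ) → (Fin 2 → ℝ) :=
  fun p => (-2 * (1 - 2 * ρ)) • p

lemma pd_const (k : Fin 2) (c : ℝ) (p : Fin 2 → ℝ) : pd k (fun _ => c) p = 0 := by
  simp [pd]

lemma pd_const_mul_apply (c : ℝ) (i k : Fin 2) (p : Fin 2 → ℝ) :
    pd i (fun q => c * q k) p = if k = i then c else 0 := by
  rw [pd, ((hasFDerivAt_apply k p).const_mul c).fderiv]
  simp [Pi.single_apply]

lemma pd_comp_sq_add_sq {h : ℝ → ℝ} {h' : ℝ} {p : Fin 2 → ℝ}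
    (hh : HasDerivAt h h' (p 0 ^ 2 + p 1 ^ 2)) (k : Fin 2) :
    pd k (fun q => h (q 0 ^ 2 + q 1 ^ 2)) p = h' * (2 * p k) := by
  have hr := ((hasFDerivAt_apply (𝕜 := ℝ) 0 p).pow 2).add ((hasFDerivAt_apply (𝕜 := ℝ) 1 p).pow 2)
  have hc : HasFDerivAt (fun q : Fin 2 → ℝ => h (q 0 ^ 2 + q 1 ^ 2)) _ p :=
    hh.comp_hasFDerivAt p hr
  rw [pd, hc.fderiv]
  fin_cases k <;> simp

lemma lieDeriv_smul_id_radial (c : ℝ) {h : ℝ → ℝ} {h' : ℝ} {p : Fin 2 → ℝ}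
    (hh : HasDerivAt h h' (p 0 ^ 2 + p 1 ^ 2)) :
    lieDeriv (fun q => c • q) (fun q => h (q 0 ^ 2 + q 1 ^ 2) • (1 : Matrix (Fin 2) (Fin 2) ℝ)) p
      = (2 * c * ((p 0 ^ 2 + p 1 ^ 2) * h' + h (p 0 ^ 2 + p 1 ^ 2))) • 1 := by
  ext i j
  fin_cases i <;> fin_cases j <;>
    simp [lieDeriv, Fin.sum_univ_two, Matrix.one_apply, pd_const_mul_apply, pd_const,
      pd_comp_sq_add_sq hh] <;> ring

lemma hasDerivAt_const_div_add_pow (K E t : ℝ) (n : ℕ) (ht : E + t ≠ 0) :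
    HasDerivAt (fun s => K / (E + s) ^ n) (-(n * K) / (E + t) ^ (n + 1)) t := by
  have hd : HasDerivAt (fun s => K / (E + s) ^ n) _ t :=
    (hasDerivAt_const t K).div (((hasDerivAt_id t).const_add E).pow n) (pow_ne_zero n ht)
  convert hd using 1
  rcases n with _ | n
  · simp
  · simp only [id, Nat.cast_add, Nat.cast_one, Nat.add_sub_cancel]
    field_simp
    ring

lemma lieDeriv_xiRB_cigarRB {E : ℝ} (hE : 0 < E) (ρ : ℝ) (p : Fin 2 → ℝ) :
    lieDeriv (xiRB ρ) (cigarRB E) p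
      = (-4 * (1 - 2 * ρ) * E / (E + p 0 ^ 2 + p 1 ^ 2) ^ 2) • 1 := by
  have hD : E + (p 0 ^ 2 + p 1 ^ 2) ≠ 0 := by positivity
  have hg : cigarRB E = fun q => (1 / (E + (q 0 ^ 2 + q 1 ^ 2)) ^ 1) • 1 := by
    funext q
    simp [cigarRB, add_assoc]
  unfold xiRB
  rw [hg, lieDeriv_smul_id_radial _ (hasDerivAt_const_div_add_pow 1 E _ 1 hD)]
  congr 1
  field_simp
  ring

lemma lieDeriv_xiRB_lieDeriv_xiRB_cigarRB {E : ℝ} (hE : 0 < E) (ρ : ℝ) (p : Fin 2 → ℝ) :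
    lieDeriv (xiRB ρ) (lieDeriv (xiRB ρ) (cigarRB E)) p
      = (16 * (1 - 2 * ρ) ^ 2 * E * (E - p 0 ^ 2 - p 1 ^ 2) / (E + p 0 ^ 2 + p 1 ^ 2) ^ 3) • 1 := by
  have hD : E + (p 0 ^ 2 + p 1 ^ 2) ≠ 0 := by positivity
  have hLg : lieDeriv (xiRB ρ) (cigarRB E)
      = fun q => (-4 * (1 - 2 * ρ) * E / (E + (q 0 ^ 2 + q 1 ^ 2)) ^ 2) • 1 := by
    funext q
    rw [lieDeriv_xiRB_cigarRB hE, add_assoc]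
  rw [hLg]
  unfold xiRB
  rw [lieDeriv_smul_id_radial _ (hasDerivAt_const_div_add_pow _ E _ 2 hD)]
  congr 1
  field_simp
  ring

theorem cigar_potential_mixedKilling_general (E ρ : ℝ) (hE : 0 < E) :
    (∀ p : Fin 2 → ℝ, lieDeriv (xiRB ρ) (cigarRB E) p
        = (-4 * (1 - 2 * ρ) * E / (E + p 0 ^ 2 + p 1 ^ 2)) • cigarRB E p) ∧
    (∀ p : Fin 2 → ℝ, lieDeriv (xiRB ρ) (lieDeriv (xiRB ρ) (cigarRB E)) p
        = (-4 * (1 - 2 * ρ) * (E - p 0 ^ 2 - p 1 ^ 2) / (E + p 0 ^ 2 + p 1 ^ 2)) •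
            lieDeriv (xiRB ρ) (cigarRB E) p) ∧
    (∃ f : (Fin 2 → ℝ) → ℝ, ∀ p,
        lieDeriv (xiRB ρ) (lieDeriv (xiRB ρ) (cigarRB E)) p
          = f p • lieDeriv (xiRB ρ) (cigarRB E) p) := by
  have hLg (p : Fin 2 → ℝ) : lieDeriv (xiRB ρ) (cigarRB E) p
      = (-4 * (1 - 2 * ρ) * E / (E + p 0 ^ 2 + p 1 ^ 2)) • cigarRB E p := by
    rw [lieDeriv_xiRB_cigarRB hE, cigarRB, smul_smul]
    congr 1
    field_simp
  have hLLg (p : Fin 2 → ℝ) : lieDeriv (xiRB ρ) (lieDeriv (xiRB ρ) (cigarRB E)) p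
      = (-4 * (1 - 2 * ρ) * (E - p 0 ^ 2 - p 1 ^ 2) / (E + p 0 ^ 2 + p 1 ^ 2)) •
          lieDeriv (xiRB ρ) (cigarRB E) p := by
    rw [lieDeriv_xiRB_lieDeriv_xiRB_cigarRB hE, lieDeriv_xiRB_cigarRB hE, smul_smul]
    congr 1
    field_simp
    ring
  exact ⟨hLg, hLLg, _, hLLg⟩

/-- For `E > 0`, `ρ ≠ 1/2`: `L_ξ g = ψ·g` with
`ψ = -4(1-2ρ)E/(E+x²+y²)`, and `L_ξ L_ξ g = α · L_ξ g` with
`α = -4(1-2ρ)(E-x²-y²)/(E+x²+y²)`; in particular `ξ` is a mixed Killing field. -/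
theorem cigar_potential_mixedKilling (E ρ : ℝ) (hE : 0 < E) (hρ : ρ ≠ 1 / 2) :
    (∀ p : Fin 2 → ℝ, lieDeriv (xiRB ρ) (cigarRB E) p
        = (-4 * (1 - 2 * ρ) * E / (E + p 0 ^ 2 + p 1 ^ 2)) • cigarRB E p) ∧
    (∀ p : Fin 2 → ℝ, lieDeriv (xiRB ρ) (lieDeriv (xiRB ρ) (cigarRB E)) p
        = (-4 * (1 - 2 * ρ) * (E - p 0 ^ 2 - p 1 ^ 2) / (E + p 0 ^ 2 + p 1 ^ 2)) •
            lieDeriv (xiRB ρ) (cigarRB E) p) ∧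
    (∃ f : (Fin 2 → ℝ) → ℝ, ∀ p,
        lieDeriv (xiRB ρ) (lieDeriv (xiRB ρ) (cigarRB E)) p
          = f p • lieDeriv (xiRB ρ) (cigarRB E) p) :=
  cigar_potential_mixedKilling_general E ρ hE
end
end

section
/- Consider the rotationally symmetric metric g = dr² + h(r)²dθ² with h(0) = 0, h'(0) = 1, h > 0 and h' > 0 for r > 0. If a radial function f satisfies the system f'' = (ρ-1/2)R and (h'/h)f' = (ρ-1/2)R with R = -2h''/h and ρ ≠ 1/2, and the curvature K = -h''/h is positive, then h(r) = (1/√A)tanh(√A r) for some constant A > 0. -/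
open Real

noncomputable section

/-- If `g` has derivative zero at every positive point, it is constant on `(0, ∞)`. -/
lemma aux_const_of_deriv_zero_pos {g : ℝ → ℝ} (hg : ∀ x : ℝ, 0 < x → HasDerivAt g 0 x)
    {a b : ℝ} (ha : 0 < a) (hab : a ≤ b) : g b = g a := by
  have := constant_of_has_deriv_right_zero (f := g) (a := a) (b := b)
    (fun x hx => (hg x (lt_of_lt_of_le ha hx.1)).continuousAt.continuousWithinAt)
    (fun x hx => (hg x (lt_of_lt_of_le ha hx.1)).hasDerivWithinAt)
  exact this b ⟨hab, le_rfl⟩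

lemma aux_tanh_eq (x : ℝ) : Real.tanh x = (Real.exp (2*x) - 1) / (Real.exp (2*x) + 1) := by
  rw [Real.tanh_eq_sinh_div_cosh, Real.sinh_eq, Real.cosh_eq]
  have h1 : Real.exp (2*x) = Real.exp x * Real.exp x := by
    rw [← Real.exp_add]; ring_nf
  have h2 : Real.exp x ≠ 0 := (Real.exp_pos x).ne'
  rw [Real.exp_neg] at *
  rw [div_eq_div_iff (by positivity) (by positivity)]
  field_simp [h1]
  rw [h1]; ring

/-- For the rotationally symmetric metric `g = dr² + h(r)²dθ²`
(`h(0)=0`, `h'(0)=1`, `h, h' > 0` for `r > 0`), if a radial function `f` satisfies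
`f'' = (ρ-1/2)R` and `(h'/h) f' = (ρ-1/2)R` with `R = -2h''/h`, `ρ ≠ 1/2`, and positive
curvature `K = -h''/h > 0`, then `h(r) = (1/√A) tanh(√A r)` for some `A > 0`. -/
theorem rotsym_rigidity (h f : ℝ → ℝ) (ρ : ℝ)
    (hh : ContDiff ℝ (⊤ : ℕ∞) h) (hf : ContDiff ℝ (⊤ : ℕ∞) f)
    (hρ : ρ ≠ 1 / 2)
    (h0 : h 0 = 0) (h0' : deriv h 0 = 1)
    (hpos : ∀ r : ℝ, 0 < r → 0 < h r ∧ 0 < deriv h r)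
    (hsys1 : ∀ r : ℝ, 0 < r →
      deriv (deriv f) r = (ρ - 1 / 2) * (-2 * deriv (deriv h) r / h r))
    (hsys2 : ∀ r : ℝ, 0 < r →
      (deriv h r / h r) * deriv f r = (ρ - 1 / 2) * (-2 * deriv (deriv h) r / h r))
    (hK : ∀ r : ℝ, 0 < r → 0 < -(deriv (deriv h) r) / h r) :
    ∃ A : ℝ, 0 < A ∧ ∀ r : ℝ, 0 ≤ r →
      h r = (1 / Real.sqrt A) * Real.tanh (Real.sqrt A * r) := by
  -- basic differentiability facts
  have hh' : ContDiff ℝ ((⊤:ℕ∞) : WithTop ℕ∞) (deriv h) :=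
    (contDiff_infty_iff_deriv.mp (hh.of_le (by simp))).2
  have hf' : ContDiff ℝ ((⊤:ℕ∞) : WithTop ℕ∞) (deriv f) :=
    (contDiff_infty_iff_deriv.mp (hf.of_le (by simp))).2
  have Dh : ∀ x : ℝ, HasDerivAt h (deriv h x) x :=
    fun x => (hh.differentiable (by simp) x).hasDerivAt
  have Dh' : ∀ x : ℝ, HasDerivAt (deriv h) (deriv (deriv h) x) x :=
    fun x => (hh'.differentiable (by simp) x).hasDerivAt
  have Df' : ∀ x : ℝ, HasDerivAt (deriv f) (deriv (deriv f) x) x :=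
    fun x => (hf'.differentiable (by simp) x).hasDerivAt
  set b : ℝ := 2 * ρ - 1 with hbdef
  have hb : b ≠ 0 := by
    intro hb0; apply hρ; have : 2 * ρ = 1 := by linarith [hb0]
    linarith
  -- f'' = (h'/h) f' on (0,∞)
  have hff : ∀ r : ℝ, 0 < r →
      deriv (deriv f) r = (deriv h r / h r) * deriv f r := by
    intro r hr; rw [hsys1 r hr, ← hsys2 r hr]
  -- f'/h constant on (0,∞)
  set c : ℝ := deriv f 1 / h 1 with hcdef
  have hfc : ∀ r : ℝ, 0 < r → deriv f r = c * h r := by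
    intro r hr
    have hne : ∀ x : ℝ, 0 < x → h x ≠ 0 := fun x hx => (hpos x hx).1.ne'
    have hg : ∀ x : ℝ, 0 < x → HasDerivAt (fun y => deriv f y / h y) 0 x := by
      intro x hx
      have : HasDerivAt (fun y => deriv f y / h y)
          ((deriv (deriv f) x * h x - deriv f x * deriv h x) / h x ^ 2) x :=
        (Df' x).div (Dh x) (hne x hx)
      convert this using 1
      rw [hff x hx]
      field_simp [hne x hx]
      ring
    have hgc : deriv f r / h r = c := by
      rcases le_total r 1 with hr1 | hr1
      · exact (aux_const_of_deriv_zero_pos hg hr hr1).symm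
      · exact aux_const_of_deriv_zero_pos hg one_pos hr1
    rw [← hgc]; field_simp [hne r hr]
  -- key ODE: c h h' = -b h''
  have key : ∀ r : ℝ, 0 < r →
      c * h r * deriv h r = -b * deriv (deriv h) r := by
    intro r hr
    have h2 := hsys2 r hr
    rw [hfc r hr] at h2
    have hne : h r ≠ 0 := (hpos r hr).1.ne'
    field_simp at h2
    have key' : (c * h r * deriv h r - -b * deriv (deriv h) r) * (2 * h r) = 0 := by
      rw [hbdef]
      linear_combination (2 * h r) * h2
    rcases mul_eq_zero.mp key' with h3 | h3
    · linarith [h3]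
    · exact absurd h3 (by positivity)
  -- first integral: φ := -b h' - c h²/2 is constant
  set φ : ℝ → ℝ := fun x => -b * deriv h x - c * (h x) ^ 2 / 2 with hφdef
  have Dφ : ∀ x : ℝ, 0 < x → HasDerivAt φ 0 x := by
    intro x hx
    have d1 : HasDerivAt (fun y => -b * deriv h y) (-b * deriv (deriv h) x) x :=
      (Dh' x).const_mul (-b)
    have d2 : HasDerivAt (fun y => c * (h y) ^ 2 / 2)
        (c * (2 * h x ^ 1 * deriv h x) / 2) x := (((Dh x).pow 2).const_mul c).div_const 2
    have : HasDerivAt φ (-b * deriv (deriv h) x - c * (2 * h x ^ 1 * deriv h x) / 2) x :=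
      d1.sub d2
    convert this using 1
    have hk := key x hx
    simp only [pow_one]
    linear_combination hk
  have hφcont : Continuous φ := by
    apply Continuous.sub
    · exact continuous_const.mul hh'.continuous
    · exact (continuous_const.mul (hh.continuous.pow 2)).div_const 2
  have hφval : ∀ r : ℝ, 0 ≤ r → φ r = -b := by
    have hφ0 : φ 0 = -b := by simp [hφdef, h0, h0']
    intro r hr
    rcases eq_or_lt_of_le hr with rfl | hr
    · exact hφ0
    · have hconst : ∀ x ∈ Set.Ioc (0:ℝ) r, φ x = φ r := by
        intro x hx
        exact (aux_const_of_deriv_zero_pos Dφ hx.1 hx.2).symm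
      have t1 : Filter.Tendsto φ (nhdsWithin 0 (Set.Ioi 0)) (nhds (φ 0)) :=
        (hφcont.tendsto 0).mono_left nhdsWithin_le_nhds
      have t2 : Filter.Tendsto φ (nhdsWithin 0 (Set.Ioi 0)) (nhds (φ r)) := by
        apply Filter.Tendsto.congr' _ tendsto_const_nhds
        filter_upwards [Ioc_mem_nhdsGT_of_mem ⟨le_refl (0:ℝ), hr⟩] with x hx
        exact (hconst x hx).symm
      rw [← tendsto_nhds_unique t1 t2, hφ0]
  set A : ℝ := c / (2 * b) with hAdef
  -- the ODE h' = 1 - A h²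
  have hODE : ∀ r : ℝ, 0 ≤ r → deriv h r = 1 - A * (h r) ^ 2 := by
    intro r hr
    have hv := hφval r hr
    simp only [hφdef] at hv
    rw [hAdef]
    field_simp
    linear_combination (-2) * hv
  -- A > 0
  have hA : 0 < A := by
    have h1 := key 1 one_pos
    have hK1 := hK 1 one_pos
    have hp1 := hpos 1 one_pos
    have hdd : deriv (deriv h) 1 < 0 := by
      by_contra hcon
      push_neg at hcon
      have : -(deriv (deriv h) 1) / h 1 ≤ 0 := by
        apply div_nonpos_of_nonpos_of_nonneg <;> linarith [hp1.1]
      linarith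
    have hcb : 0 < c * b := by
      have hbb : (0:ℝ) < b ^ 2 := by positivity
      have heq : c * b * (h 1 * deriv h 1) = b ^ 2 * (-(deriv (deriv h) 1)) := by
        linear_combination b * h1
      have hP : 0 < h 1 * deriv h 1 := mul_pos hp1.1 hp1.2
      by_contra hcon
      push_neg at hcon
      have : c * b * (h 1 * deriv h 1) ≤ 0 := mul_nonpos_of_nonpos_of_nonneg hcon hP.le
      nlinarith [heq, hbb, hdd]
    rw [hAdef]
    rcases lt_trichotomy b 0 with hbneg | hb0 | hbpos
    · have hc : c < 0 := by nlinarith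
      apply div_pos_iff.mpr; right; constructor <;> linarith
    · exact absurd hb0 hb
    · have hc : 0 < c := by nlinarith
      positivity
  refine ⟨A, hA, ?_⟩
  -- solve the ODE
  have hsA : 0 < Real.sqrt A := Real.sqrt_pos.mpr hA
  have hAsq : Real.sqrt A * Real.sqrt A = A := Real.mul_self_sqrt hA.le
  have hhn : ∀ x : ℝ, 0 ≤ x → 0 ≤ h x := by
    intro x hx
    rcases eq_or_lt_of_le hx with rfl | hx
    · rw [h0]
    · exact (hpos x hx).1.le
  set ψ : ℝ → ℝ := fun x =>
    Real.exp (2 * Real.sqrt A * x) * (1 - Real.sqrt A * h x) / (1 + Real.sqrt A * h x)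
    with hψdef
  have hden : ∀ x : ℝ, 0 ≤ x → (0:ℝ) < 1 + Real.sqrt A * h x := by
    intro x hx
    have := hhn x hx
    nlinarith
  have Dψ : ∀ x : ℝ, 0 ≤ x → HasDerivAt ψ 0 x := by
    intro x hx
    have du : HasDerivAt (fun y => 1 - Real.sqrt A * h y)
        (-(Real.sqrt A * deriv h x)) x := by
      exact ((Dh x).const_mul (Real.sqrt A)).const_sub 1
    have dv : HasDerivAt (fun y => 1 + Real.sqrt A * h y)
        (Real.sqrt A * deriv h x) x := by
      exact ((Dh x).const_mul (Real.sqrt A)).const_add 1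
    have de : HasDerivAt (fun y => Real.exp (2 * Real.sqrt A * y))
        (Real.exp (2 * Real.sqrt A * x) * (2 * Real.sqrt A)) x := by
      have : HasDerivAt (fun y : ℝ => 2 * Real.sqrt A * y) (2 * Real.sqrt A) x := by
        simpa using (hasDerivAt_id x).const_mul (2 * Real.sqrt A)
      exact (Real.hasDerivAt_exp _).comp x this
    have dnum := de.mul du
    have : HasDerivAt ψ
        (((Real.exp (2 * Real.sqrt A * x) * (2 * Real.sqrt A) * (1 - Real.sqrt A * h x) +
            Real.exp (2 * Real.sqrt A * x) * -(Real.sqrt A * deriv h x)) * (1 + Real.sqrt A * h x) -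
          Real.exp (2 * Real.sqrt A * x) * (1 - Real.sqrt A * h x) * (Real.sqrt A * deriv h x)) /
          (1 + Real.sqrt A * h x) ^ 2) x :=
      dnum.div dv (hden x hx).ne'
    have hODE' : deriv h x = 1 - Real.sqrt A * Real.sqrt A * (h x) ^ 2 := by
      rw [hAsq]; exact hODE x hx
    convert this using 1
    rw [hODE']
    have hd := (hden x hx).ne'
    field_simp
    ring
  intro r hr
  have hψr : ψ r = ψ 0 := by
    rcases eq_or_lt_of_le hr with rfl | hr
    · rfl
    · have := constant_of_has_deriv_right_zero (f := ψ) (a := 0) (b := r)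
        (fun x hx => (Dψ x hx.1).continuousAt.continuousWithinAt)
        (fun x hx => (Dψ x hx.1).hasDerivWithinAt)
      exact this r ⟨hr.le, le_rfl⟩
  have hψ0 : ψ 0 = 1 := by simp [hψdef, h0]
  rw [hψ0] at hψr
  simp only [hψdef] at hψr
  have hd := hden r hr
  rw [div_eq_one_iff_eq hd.ne'] at hψr
  -- extract h r
  rw [aux_tanh_eq, show 2 * (Real.sqrt A * r) = 2 * Real.sqrt A * r from by ring]
  have he : (0:ℝ) < Real.exp (2 * Real.sqrt A * r) + 1 := by positivity
  field_simp
  linear_combination (norm := ring_nf) -hψr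
end
end

section
/- For geodesics of g = ds² + tanh²(s)dθ² with conserved quantities ℓ ≠ 0 and k > ℓ², the radial evolution satisfies cosh(s(σ)) = √(k/(k-ℓ²))·cosh(√(k-ℓ²)·σ) (after a shift of the affine parameter σ); in particular s(σ) → ∞ as σ → ±∞, and the minimal value s_min satisfies coth²(s_min) = k/ℓ². -/
/-!
Along a geodesic, `u = cosh ∘ s` satisfies the linear equation `u'' = ω² u` with
`ω = √(k - ℓ²)`, and the conserved quantities give the first integral `ω² u² - u'² = k`.
Hence `(u' ± ω u) e^{∓ωσ}` are constant, so `2ω u = a e^{ωσ} + b e^{-ωσ}` where the first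
integral forces `a b = k`, and positivity of `u` makes `a, b > 0`. Such a combination is
`2√k cosh (ω (σ - σ₀))`; divergence, minimality at `σ₀` and the value of `coth² (s σ₀)`
are read off from this closed form.
-/

open Real Filter

namespace Real

theorem hasDerivAt_tanh (x : ℝ) : HasDerivAt tanh (1 / cosh x ^ 2) x := by
  have h := (hasDerivAt_sinh x).div (hasDerivAt_cosh x) (cosh_pos x).ne'
  rw [show sinh / cosh = tanh from funext fun y => (tanh_eq_sinh_div_cosh y).symm] at h
  refine h.congr_deriv ?_
  rw [← cosh_sq_sub_sinh_sq x]
  ring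

theorem one_div_tanh_sq_eq_of_cosh_sq_eq {x k ℓ : ℝ} (h : cosh x ^ 2 = k / (k - ℓ ^ 2)) :
    (1 / tanh x) ^ 2 = k / ℓ ^ 2 := by
  have hc : cosh x ^ 2 ≠ 0 := by positivity
  have hk : k ≠ 0 := by rintro rfl; exact hc (by simpa using h)
  have hkℓ : k - ℓ ^ 2 ≠ 0 := fun h₀ => hc (by simpa [h₀] using h)
  have htanh : tanh x ^ 2 = ℓ ^ 2 / k := by
    rw [tanh_eq_sinh_div_cosh, div_pow, sinh_sq, h]
    field_simp
    ring
  rw [div_pow, one_pow, htanh, one_div_div]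

theorem tendsto_cosh_atTop : Tendsto cosh atTop atTop :=
  tendsto_atTop_mono (fun x => by rw [cosh_eq]; linarith [exp_pos (-x)])
    (tendsto_exp_atTop.atTop_div_const two_pos)

theorem tendsto_cosh_atBot : Tendsto cosh atBot atTop := by
  simpa [Function.comp_def] using tendsto_cosh_atTop.comp tendsto_neg_atBot_atTop

end Real

theorem Filter.Tendsto.of_cosh_comp {α : Type*} {l : Filter α} {f : α → ℝ} (hf : ∀ x, 0 ≤ f x)
    (h : Tendsto (fun x => cosh (f x)) l atTop) : Tendsto f l atTop := by
  refine tendsto_atTop.2 fun M => ?_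
  filter_upwards [tendsto_atTop.1 h (cosh M)] with x hx
  exact (le_abs_self M).trans ((cosh_le_cosh.1 hx).trans_eq (abs_of_nonneg (hf x)))

theorem exists_add_mul_eq_mul_exp_of_hasDerivAt {u u' : ℝ → ℝ} {ω : ℝ}
    (hu : ∀ t, HasDerivAt u (u' t) t) (hu' : ∀ t, HasDerivAt u' (ω ^ 2 * u t) t) :
    ∃ C, ∀ t, u' t + ω * u t = C * exp (ω * t) := by
  set f : ℝ → ℝ := fun t => (u' t + ω * u t) * exp (-(ω * t))
  have hf : ∀ t, HasDerivAt f 0 t := fun t => by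
    refine (((hu' t).add ((hu t).const_mul ω)).mul
      ((hasDerivAt_id t).const_mul ω).neg.exp).congr_deriv ?_
    simp only [Pi.neg_apply, Pi.add_apply, id_eq, mul_one]
    ring
  refine ⟨f 0, fun t => ?_⟩
  rw [← is_const_of_deriv_eq_zero (fun t => (hf t).differentiableAt) (fun t => (hf t).deriv) t 0]
  simp only [f, mul_assoc, ← exp_add, neg_add_cancel, exp_zero, mul_one]

theorem exists_mul_exp_add_mul_exp_neg_eq_mul_cosh {a b : ℝ} (ha : 0 < a) (hb : 0 < b) :
    ∃ x₀, ∀ x, a * exp x + b * exp (-x) = 2 * √(a * b) * cosh (x - x₀) := by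
  have : 0 < √a := sqrt_pos.2 ha
  have : 0 < √b := sqrt_pos.2 hb
  have hx₀ : exp (log √b - log √a) = √b / √a := by
    rw [exp_sub, exp_log (by positivity), exp_log (by positivity)]
  refine ⟨log √b - log √a, fun x => ?_⟩
  rw [cosh_eq, neg_sub, exp_sub x, exp_sub _ x, hx₀, exp_neg x, sqrt_mul ha.le]
  field_simp
  rw [sq_sqrt ha.le, sq_sqrt hb.le]
  ring

theorem exists_eq_mul_cosh_of_hasDerivAt {u u' : ℝ → ℝ} {ω k : ℝ} (hω : 0 < ω) (hk : 0 < k)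
    (hu : ∀ t, HasDerivAt u (u' t) t) (hu' : ∀ t, HasDerivAt u' (ω ^ 2 * u t) t)
    (hu₀ : 0 < u 0) (henergy : ω ^ 2 * u 0 ^ 2 - u' 0 ^ 2 = k) :
    ∃ t₀, ∀ t, u t = √k / ω * cosh (ω * (t - t₀)) := by
  obtain ⟨a, hplus⟩ := exists_add_mul_eq_mul_exp_of_hasDerivAt hu hu'
  obtain ⟨c, hminus⟩ := exists_add_mul_eq_mul_exp_of_hasDerivAt (ω := -ω) hu (by simpa using hu')
  simp only [neg_mul, ← sub_eq_add_neg] at hminus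
  have ha₀ : u' 0 + ω * u 0 = a := by simpa using hplus 0
  have hc₀ : u' 0 - ω * u 0 = c := by simpa using hminus 0
  have hac : a * -c = k := by rw [← ha₀, ← hc₀, ← henergy]; ring
  obtain ⟨ha, hc⟩ : 0 < a ∧ 0 < -c :=
    (pos_and_pos_or_neg_and_neg_of_mul_pos (hac ▸ hk)).resolve_right fun h => by
      nlinarith [mul_pos hω hu₀]
  obtain ⟨x₀, hx₀⟩ := exists_mul_exp_add_mul_exp_neg_eq_mul_cosh ha hc
  refine ⟨x₀ / ω, fun t => ?_⟩
  have harg : ω * (t - x₀ / ω) = ω * t - x₀ := by field_simp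
  have hu_t : 2 * ω * u t = 2 * √k * cosh (ω * t - x₀) := by
    rw [← hac, ← hx₀ (ω * t)]
    linear_combination hplus t - hminus t
  rw [harg]
  field_simp
  linarith

namespace CigarGeodesic

variable {s θ : ℝ → ℝ} {ℓ k σ : ℝ}

theorem sq_sinh_mul_deriv (hℓ : tanh (s σ) ^ 2 * deriv θ σ = ℓ)
    (hk : deriv s σ ^ 2 + tanh (s σ) ^ 2 * deriv θ σ ^ 2 = k) :
    (sinh (s σ) * deriv s σ) ^ 2 = (k - ℓ ^ 2) * cosh (s σ) ^ 2 - k := by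
  have hc := (cosh_pos (s σ)).ne'
  rw [← hℓ, ← hk, tanh_eq_sinh_div_cosh]
  field_simp
  linear_combination (-deriv s σ ^ 2 * cosh (s σ) ^ 2 - sinh (s σ) ^ 2 * deriv θ σ ^ 2) *
    cosh_sq (s σ)

theorem hasDerivAt_sinh_mul_deriv (hs : ContDiff ℝ 2 s)
    (hgeo : deriv (deriv s) σ = tanh (s σ) * deriv tanh (s σ) * deriv θ σ ^ 2)
    (hℓ : tanh (s σ) ^ 2 * deriv θ σ = ℓ)
    (hk : deriv s σ ^ 2 + tanh (s σ) ^ 2 * deriv θ σ ^ 2 = k) :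
    HasDerivAt (fun σ => sinh (s σ) * deriv s σ) ((k - ℓ ^ 2) * cosh (s σ)) σ := by
  obtain ⟨hs₁, -, hs₂⟩ :=
    (contDiff_succ_iff_deriv (n := 1)).1 (by simpa [one_add_one_eq_two] using hs)
  have hc := (cosh_pos (s σ)).ne'
  refine ((hs₁ σ).hasDerivAt.sinh.mul
    (hs₂.differentiable one_ne_zero σ).hasDerivAt).congr_deriv ?_
  rw [hgeo, (hasDerivAt_tanh _).deriv, ← hℓ, ← hk, tanh_eq_sinh_div_cosh]
  field_simp
  linear_combination (-sinh (s σ) ^ 2 * deriv θ σ ^ 2) * cosh_sq (s σ)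

theorem exists_cosh_eq_mul_cosh (hs : ContDiff ℝ 2 s)
    (hgeo : ∀ σ, deriv (deriv s) σ = tanh (s σ) * deriv tanh (s σ) * deriv θ σ ^ 2)
    (hℓ : ∀ σ, tanh (s σ) ^ 2 * deriv θ σ = ℓ)
    (hk : ∀ σ, deriv s σ ^ 2 + tanh (s σ) ^ 2 * deriv θ σ ^ 2 = k) (hkℓ : ℓ ^ 2 < k) :
    ∃ σ₀, ∀ σ, cosh (s σ) = √(k / (k - ℓ ^ 2)) * cosh (√(k - ℓ ^ 2) * (σ - σ₀)) := by
  have hω : 0 < k - ℓ ^ 2 := sub_pos.2 hkℓ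
  rw [sqrt_div' _ hω.le]
  refine exists_eq_mul_cosh_of_hasDerivAt (sqrt_pos.2 hω) ((sq_nonneg ℓ).trans_lt hkℓ)
    (fun σ => (hs.differentiable two_ne_zero σ).hasDerivAt.cosh) (fun σ => ?_) (cosh_pos _) ?_
  · rw [sq_sqrt hω.le]
    exact hasDerivAt_sinh_mul_deriv hs (hgeo σ) (hℓ σ) (hk σ)
  · rw [sq_sqrt hω.le, sq_sinh_mul_deriv (hℓ 0) (hk 0)]
    ring

end CigarGeodesic

theorem geodesic_radial_evolution_general (s θ : ℝ → ℝ) (ℓ k : ℝ)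
    (hs : ContDiff ℝ 2 s)
    (hspos : ∀ σ : ℝ, 0 < s σ)
    (hgeo1 : ∀ σ : ℝ, deriv (deriv s) σ
        = Real.tanh (s σ) * deriv Real.tanh (s σ) * (deriv θ σ) ^ 2)
    (hℓ : ∀ σ : ℝ, Real.tanh (s σ) ^ 2 * deriv θ σ = ℓ)
    (hk : ∀ σ : ℝ, (deriv s σ) ^ 2 + Real.tanh (s σ) ^ 2 * (deriv θ σ) ^ 2 = k)
    (hkℓ : ℓ ^ 2 < k) :
    ∃ σ₀ : ℝ,
      (∀ σ : ℝ, Real.cosh (s σ)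
          = Real.sqrt (k / (k - ℓ ^ 2)) * Real.cosh (Real.sqrt (k - ℓ ^ 2) * (σ - σ₀))) ∧
      Tendsto s atTop atTop ∧ Tendsto s atBot atTop ∧
      (1 / Real.tanh (s σ₀)) ^ 2 = k / ℓ ^ 2 ∧
      (∀ σ : ℝ, s σ₀ ≤ s σ) := by
  obtain ⟨σ₀, hcosh⟩ := CigarGeodesic.exists_cosh_eq_mul_cosh hs hgeo1 hℓ hk hkℓ
  have hA₂ : 0 < k / (k - ℓ ^ 2) := div_pos ((sq_nonneg ℓ).trans_lt hkℓ) (sub_pos.2 hkℓ)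
  have hA : 0 < √(k / (k - ℓ ^ 2)) := sqrt_pos.2 hA₂
  have hω : 0 < √(k - ℓ ^ 2) := sqrt_pos.2 (sub_pos.2 hkℓ)
  have hmin : cosh (s σ₀) = √(k / (k - ℓ ^ 2)) := by simpa using hcosh σ₀
  have hs₀ : ∀ σ, 0 ≤ s σ := fun σ => (hspos σ).le
  refine ⟨σ₀, hcosh, .of_cosh_comp hs₀ ?_, .of_cosh_comp hs₀ ?_, ?_, fun σ => ?_⟩
  · simp_rw [hcosh]
    exact (tendsto_cosh_atTop.comp ((tendsto_atTop_add_const_right _ (-σ₀) tendsto_id)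
      |>.const_mul_atTop hω)).const_mul_atTop hA
  · simp_rw [hcosh]
    exact (tendsto_cosh_atBot.comp ((tendsto_atBot_add_const_right _ (-σ₀) tendsto_id)
      |>.const_mul_atBot hω)).const_mul_atTop hA
  · exact one_div_tanh_sq_eq_of_cosh_sq_eq (by rw [hmin, sq_sqrt hA₂.le])
  · have hle : cosh (s σ₀) ≤ cosh (s σ) := by
      rw [hmin, hcosh σ]
      exact le_mul_of_one_le_right hA.le (one_le_cosh _)
    simpa [abs_of_pos (hspos σ₀), abs_of_pos (hspos σ)] using cosh_le_cosh.1 hle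

/-- For a geodesic `γ(σ) = (s(σ), θ(σ))` of the cigar metric
`ds² + tanh²(s)dθ²` with conserved quantities `ℓ = tanh²(s)θ̇ ≠ 0` and
`k = ṡ² + tanh²(s)θ̇² > ℓ²`, after a shift of the affine parameter,
`cosh(s(σ)) = √(k/(k-ℓ²)) cosh(√(k-ℓ²) σ)`; in particular `s(σ) → ∞` as
`σ → ±∞`, and the minimal value `s_min = s(σ₀)` satisfies `coth²(s_min) = k/ℓ²`. -/
theorem geodesic_radial_evolution (s θ : ℝ → ℝ) (ℓ k : ℝ)
    (hs : ContDiff ℝ 2 s) (hθ : ContDiff ℝ 2 θ)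
    (hspos : ∀ σ : ℝ, 0 < s σ)
    (hgeo1 : ∀ σ : ℝ, deriv (deriv s) σ
        = Real.tanh (s σ) * deriv Real.tanh (s σ) * (deriv θ σ) ^ 2)
    (hgeo2 : ∀ σ : ℝ, deriv (deriv θ) σ
        = -2 * (deriv Real.tanh (s σ) / Real.tanh (s σ)) * deriv s σ * deriv θ σ)
    (hℓ : ∀ σ : ℝ, Real.tanh (s σ) ^ 2 * deriv θ σ = ℓ)
    (hk : ∀ σ : ℝ, (deriv s σ) ^ 2 + Real.tanh (s σ) ^ 2 * (deriv θ σ) ^ 2 = k)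
    (hℓ0 : ℓ ≠ 0) (hkℓ : ℓ ^ 2 < k) :
    ∃ σ₀ : ℝ,
      (∀ σ : ℝ, Real.cosh (s σ)
          = Real.sqrt (k / (k - ℓ ^ 2)) * Real.cosh (Real.sqrt (k - ℓ ^ 2) * (σ - σ₀))) ∧
      Tendsto s atTop atTop ∧ Tendsto s atBot atTop ∧
      (1 / Real.tanh (s σ₀)) ^ 2 = k / ℓ ^ 2 ∧
      (∀ σ : ℝ, s σ₀ ≤ s σ) :=
  geodesic_radial_evolution_general s θ ℓ k hs hspos hgeo1 hℓ hk hkℓ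
end
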